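/- arXiv:2304.08417 — 2 statements merged into one kernel-verified Lean document; each statement's English description precedes it below -/
import Mathlib

section
/- Let D be a ℂ-linear pretriangulated category with shift by ℤ that is proper over ℂ, and let (E₁, …, E_t) be an exceptional sequence in D. Then there exist integers a₁, …, a_t such that Hom(E_i⟦a_i⟧, E_j⟦a_j + n⟧) = 0 for all 1 ≤ i, j ≤ t and all integers n > 0. -/
open CategoryTheory CategoryTheory.Limits CategoryTheory.Pretriangulated

variable (D : Type*) [Category D] [Preadditive D] [HasZeroObject D]
  [HasShift D ℤ] [∀ n : ℤ, (shiftFunctor D n).Additive] [Pretriangulated D]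
  [CategoryTheory.Linear ℂ D]

/-- `D` is proper over `ℂ`: all Hom-spaces `Hom(X, Y⟦i⟧)` are finite dimensional over `ℂ`
and vanish for all but finitely many `i : ℤ`. -/
def IsProper : Prop :=
  ∀ X Y : D, (∀ i : ℤ, FiniteDimensional ℂ (X ⟶ Y⟦i⟧)) ∧
    {i : ℤ | ∃ f : X ⟶ Y⟦i⟧, f ≠ 0}.Finite

lemma shift_hom_eq_zero (X Y : D) (a b m : ℤ) (hm : b + -a = m)
    (hz : ∀ g : X ⟶ Y⟦m⟧, g = 0) : ∀ f : X⟦a⟧ ⟶ Y⟦b⟧, f = 0 := by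
  intro f
  apply (shiftFunctor D (-a)).map_injective
  rw [Functor.map_zero]
  set g : X ⟶ Y⟦m⟧ :=
    (shiftFunctorCompIsoId D a (-a) (by omega)).inv.app X ≫
      (shiftFunctor D (-a)).map f ≫ (shiftFunctorAdd' D b (-a) m hm).inv.app Y with hgdef
  have h1 : (shiftFunctor D (-a)).map f =
      (shiftFunctorCompIsoId D a (-a) (by omega)).hom.app X ≫ g ≫
        (shiftFunctorAdd' D b (-a) m hm).hom.app Y := by
    simp [hgdef]
  rw [h1, hz g]
  simp

/-- If `D` is proper over `ℂ` and `(E₁, …, E_t)` is an exceptional sequence in `D`, then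
there exist integers `a₁, …, a_t` such that `Hom(E_i⟦a_i⟧, E_j⟦a_j + n⟧) = 0` for all
`i, j` and all `n > 0`. -/
theorem stmt1 (hproper : IsProper D) (t : ℕ) (E : Fin t → D)
    (hseq : ∀ i j : Fin t, j < i → ∀ n : ℤ, ∀ f : E i ⟶ (E j)⟦n⟧, f = 0)
    (hself : ∀ i : Fin t, ∀ n : ℤ, n ≠ 0 → ∀ f : E i ⟶ (E i)⟦n⟧, f = 0)
    (hend : ∀ i : Fin t, Nonempty ((E i ⟶ E i) ≃ₗ[ℂ] ℂ)) :
    ∃ a : Fin t → ℤ, ∀ i j : Fin t, ∀ n : ℤ, 0 < n →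
      ∀ f : (E i)⟦a i⟧ ⟶ (E j)⟦a j + n⟧, f = 0 := by
  -- For each pair (i,j) choose an upper bound B i j for the finite support set.
  have hB : ∀ i j : Fin t, ∃ B : ℤ, ∀ m : ℤ, B < m → ∀ f : E i ⟶ (E j)⟦m⟧, f = 0 := by
    intro i j
    have hfin := (hproper (E i) (E j)).2
    obtain ⟨B, hBmem⟩ := hfin.bddAbove
    refine ⟨B, fun m hm f => ?_⟩
    by_contra hf
    exact absurd (hBmem ⟨f, hf⟩) (not_le.mpr hm)
  choose B hBspec using hB
  -- A nonnegative constant dominating all the bounds.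
  set C : ℤ := ((Finset.univ.sup fun p : Fin t × Fin t => (B p.1 p.2).toNat : ℕ) : ℤ) with hCdef
  have hC0 : 0 ≤ C := Int.ofNat_nonneg _
  have hCB : ∀ i j : Fin t, B i j ≤ C := by
    intro i j
    calc B i j ≤ ((B i j).toNat : ℤ) := Int.self_le_toNat _
    _ ≤ C := by
        exact_mod_cast Nat.cast_le.mpr
          (Finset.le_sup (f := fun p : Fin t × Fin t => (B p.1 p.2).toNat)
            (Finset.mem_univ (i, j)))
  refine ⟨fun i => (i : ℕ) * C, fun i j n hn f => ?_⟩
  set m : ℤ := (j : ℕ) * C + n - (i : ℕ) * C with hmdef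
  refine shift_hom_eq_zero D (E i) (E j) _ _ m (by dsimp only; omega) (fun g => ?_) f
  rcases lt_trichotomy i j with hij | hij | hij
  · -- i < j : m ≥ C + n > C ≥ B i j
    have hij' : (i : ℕ) < (j : ℕ) := hij
    have : (i : ℤ) + 1 ≤ (j : ℤ) := by exact_mod_cast hij'
    have hm : B i j < m := by
      have h1 : ((i : ℕ) : ℤ) * C + C ≤ ((j : ℕ) : ℤ) * C := by nlinarith
      have := hCB i j
      omega
    exact hBspec i j m hm g
  · subst hij
    exact hself i m (by omega) g
  · exact hseq i j hij m g
end

section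
/- Let D be a ℂ-linear pretriangulated category with shift by ℤ and finite biproducts that is proper over ℂ, and let (E₁, …, E_t) be an exceptional sequence in D. Then there exist integers a₁, …, a_t such that the object P = E₁⟦a₁⟧ ⊕ ⋯ ⊕ E_t⟦a_t⟧ is presilting in D. -/
open CategoryTheory CategoryTheory.Limits CategoryTheory.Pretriangulated

variable (D : Type*) [Category D] [Preadditive D] [HasZeroObject D]
  [HasShift D ℤ] [∀ n : ℤ, (shiftFunctor D n).Additive] [Pretriangulated D]
  [HasFiniteBiproducts D] [CategoryTheory.Linear ℂ D]

/-- An object `P` is presilting if `Hom(P, P⟦n⟧) = 0` for all integers `n > 0`. -/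
def IsPresilting (P : D) : Prop := ∀ n : ℤ, 0 < n → ∀ f : P ⟶ P⟦n⟧, f = 0

set_option linter.unusedSectionVars false in
lemma aux_shift_zero (X Y : D) (a b n : ℤ)
    (h : ∀ g : X ⟶ Y⟦b + n - a⟧, g = 0) (f : X⟦a⟧ ⟶ (Y⟦b⟧)⟦n⟧) : f = 0 := by
  let e1 : (Y⟦b⟧)⟦n⟧ ≅ Y⟦b + n⟧ := ((shiftFunctorAdd D b n).symm.app Y)
  let e2 : Y⟦b + n⟧ ≅ (Y⟦b + n - a⟧)⟦a⟧ :=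
    (shiftFunctorAdd' D (b + n - a) a (b + n) (by ring)).app Y
  have key : f ≫ e1.hom ≫ e2.hom = 0 := by
    have := (shiftFunctor D a).map_preimage (f ≫ e1.hom ≫ e2.hom)
    rw [← this, h ((shiftFunctor D a).preimage (f ≫ e1.hom ≫ e2.hom)), Functor.map_zero]
  have : f = (f ≫ e1.hom ≫ e2.hom) ≫ e2.inv ≫ e1.inv := by simp
  rw [this, key, zero_comp]

/-- If `D` is proper over `ℂ` and `(E₁, …, E_t)` is an exceptional sequence in `D`, then
there are integers `a₁, …, a_t` such that `P = E₁⟦a₁⟧ ⊕ ⋯ ⊕ E_t⟦a_t⟧` is presilting. -/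
theorem stmt3 (hproper : IsProper D) (t : ℕ) (E : Fin t → D)
    (hseq : ∀ i j : Fin t, j < i → ∀ n : ℤ, ∀ f : E i ⟶ (E j)⟦n⟧, f = 0)
    (hself : ∀ i : Fin t, ∀ n : ℤ, n ≠ 0 → ∀ f : E i ⟶ (E i)⟦n⟧, f = 0)
    (hend : ∀ i : Fin t, Nonempty ((E i ⟶ E i) ≃ₗ[ℂ] ℂ)) :
    ∃ a : Fin t → ℤ, IsPresilting D (⨁ fun i => (E i)⟦a i⟧) := by
  have hS : (⋃ (i : Fin t) (j : Fin t),
      {k : ℤ | ∃ f : E i ⟶ (E j)⟦k⟧, f ≠ 0}).Finite :=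
    Set.finite_iUnion fun i => Set.finite_iUnion fun j => (hproper (E i) (E j)).2
  obtain ⟨B, hB⟩ := hS.bddAbove
  set C : ℤ := max B 0 + 1 with hC
  have hCpos : 0 < C := by positivity
  have hCB : B < C := lt_of_le_of_lt (le_max_left _ _) (lt_add_one _)
  refine ⟨fun i => (i : ℤ) * C, ?_⟩
  intro n hn f
  have hcomp : ∀ i j : Fin t,
      ∀ g : E i ⟶ (E j)⟦(j : ℤ) * C + n - (i : ℤ) * C⟧, g = 0 := by
    intro i j g
    rcases lt_trichotomy j i with hji | hji | hij
    · exact hseq i j hji _ g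
    · subst hji
      refine hself j _ ?_ g
      have : (j : ℤ) * C + n - (j : ℤ) * C = n := by ring
      omega
    · by_contra hne
      have hmem : ((j : ℤ) * C + n - (i : ℤ) * C) ∈ ⋃ (i : Fin t) (j : Fin t),
          {k : ℤ | ∃ f : E i ⟶ (E j)⟦k⟧, f ≠ 0} := by
        refine Set.mem_iUnion.2 ⟨i, Set.mem_iUnion.2 ⟨j, ⟨g, hne⟩⟩⟩
      have hle := hB hmem
      have hij' : (i : ℤ) < (j : ℤ) := by exact_mod_cast hij
      nlinarith [hCpos, hn, hij']
  let F := shiftFunctor D n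
  let e : F.obj (⨁ fun i : Fin t => (E i)⟦(i : ℤ) * C⟧) ≅
      ⨁ fun i : Fin t => F.obj ((E i)⟦(i : ℤ) * C⟧) :=
    F.mapBiproduct _
  have : f ≫ e.hom = 0 := by
    ext j i
    rw [zero_comp, comp_zero]
    exact aux_shift_zero D (E i) (E j) _ _ n (hcomp i j) _
  calc f = (f ≫ e.hom) ≫ e.inv := by simp
    _ = 0 := by rw [this, zero_comp]
end
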